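/- arXiv:2103.00713 — 5 statements merged into one kernel-verified Lean document; each statement's English description precedes it below -/
import Mathlib

section
/- Let x, y be strings of the same length n over an alphabet Σ and let u, v be strings of the same length ℓ over Σ. Suppose no symbol occurs in both u and v, no symbol occurs in both u and y, and no symbol occurs in both v and x. Then ED(x ∘ u, y ∘ v) = ED(x, y) + ℓ. -/
open List

/-- Cost structure for the Levenshtein distance (as formerly in Mathlib). -/
structure Levenshtein.Cost (α β δ : Type*) where
  delete : α → δ
  insert : β → δ
  substitute : α → β → δ

/-- The default cost: unit deletions, insertions and substitutions (as formerly in Mathlib). -/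
def Levenshtein.defaultCost {α : Type*} [DecidableEq α] : Levenshtein.Cost α α ℕ where
  delete _ := 1
  insert _ := 1
  substitute a b := if a = b then 0 else 1

/-- The Levenshtein distance, by its defining recursion (formerly in Mathlib). -/
def levenshtein {α β δ : Type*} [AddZeroClass δ] [Min δ] (C : Levenshtein.Cost α β δ) :
    List α → List β → δ
  | [], [] => 0
  | [], y :: ys => C.insert y + levenshtein C [] ys
  | x :: xs, [] => C.delete x + levenshtein C xs []
  | x :: xs, y :: ys =>
    min (C.delete x + levenshtein C xs (y :: ys))
      (min (C.insert y + levenshtein C (x :: xs) ys) (C.substitute x y + levenshtein C xs ys))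

/-- Edit distance: minimum number of single-symbol insertions, deletions and
substitutions needed to transform `u` into `v` (Levenshtein distance with unit costs). -/
def ED {α : Type*} [DecidableEq α] (u v : List α) : ℕ :=
  levenshtein Levenshtein.defaultCost u v

/- Follow the edit-distance recurrence on `x ∘ u` and `y ∘ v`. While both `x` and `y` are
nonempty, each of the three candidates is, by induction, shifted by the same `ℓ`. Once one of
them is exhausted, what remains is a pair of strings sharing no symbol (e.g. `u` against
`y' ∘ v`), and for such a pair the distance is just the larger length, which exceeds the
distance of the exhausted prefixes by exactly `ℓ` because `|u| = |v|`. -/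

section EditDistance

variable {α : Type*} [DecidableEq α]

lemma ED_nil_left (w : List α) : ED [] w = w.length := by
  induction w with
  | nil => simp [ED, levenshtein]
  | cons b w ih => simp_all [ED, levenshtein, Levenshtein.defaultCost]; omega

lemma ED_nil_right (u : List α) : ED u [] = u.length := by
  induction u with
  | nil => simp [ED, levenshtein]
  | cons a u ih => simp_all [ED, levenshtein, Levenshtein.defaultCost]; omega

lemma ED_cons_cons (a b : α) (u w : List α) :
    ED (a :: u) (b :: w) =
      min (1 + ED u (b :: w)) (min (1 + ED (a :: u) w) ((if a = b then 0 else 1) + ED u w)) := by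
  simp [ED, levenshtein, Levenshtein.defaultCost]

lemma ED_eq_max_length_of_disjoint {u w : List α} (h : u.Disjoint w) :
    ED u w = max u.length w.length := by
  induction u generalizing w with
  | nil => simp [ED_nil_left]
  | cons a u ihu =>
    induction w with
    | nil => simp [ED_nil_right]
    | cons b w ihw =>
      have hab : a ≠ b := fun hab => h mem_cons_self (hab ▸ mem_cons_self)
      rw [ED_cons_cons, ihu (disjoint_of_disjoint_cons_left h),
        ihw (disjoint_of_disjoint_cons_right h),
        ihu (disjoint_of_disjoint_cons_right (disjoint_of_disjoint_cons_left h)), if_neg hab]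
      simp only [length_cons]
      omega

theorem ED_append_append_of_disjoint {x y u v : List α} (hlen : u.length = v.length)
    (huv : u.Disjoint v) (huy : u.Disjoint y) (hvx : v.Disjoint x) :
    ED (x ++ u) (y ++ v) = ED x y + u.length := by
  induction x generalizing y with
  | nil =>
    rw [nil_append, ED_eq_max_length_of_disjoint (disjoint_append_right.2 ⟨huy, huv⟩),
      ED_nil_left, length_append]
    omega
  | cons a x ihx =>
    induction y with
    | nil =>
      rw [nil_append, ED_eq_max_length_of_disjoint (disjoint_append_left.2 ⟨hvx.symm, huv⟩),
        ED_nil_right, length_append]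
      omega
    | cons b y ihy =>
      have huy' := disjoint_of_disjoint_cons_right huy
      have hvx' := disjoint_of_disjoint_cons_right hvx
      rw [cons_append, cons_append, ED_cons_cons, ED_cons_cons a b x y, ← cons_append,
        ← cons_append, ihx huy hvx', ihy huy', ihx huy' hvx']
      omega

end EditDistance

theorem stmt2_general {α : Type*} [DecidableEq α] (ℓ : ℕ) (x y u v : List α)
    (hu : u.length = ℓ) (hv : v.length = ℓ)
    (huv : ∀ s, s ∈ u → s ∉ v)
    (huy : ∀ s, s ∈ u → s ∉ y)
    (hvx : ∀ s, s ∈ v → s ∉ x) :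
    ED (x ++ u) (y ++ v) = ED x y + ℓ := by
  subst hu
  exact ED_append_append_of_disjoint hv.symm (fun s => huv s) (fun s => huy s) (fun s => hvx s)

/-- If `x, y` have the same length `n`, `u, v` have the same length `ℓ`,
and no symbol occurs in both `u` and `v`, nor in both `u` and `y`, nor in both `v` and `x`,
then `ED(x ∘ u, y ∘ v) = ED(x, y) + ℓ`. -/
theorem stmt2 {α : Type*} [DecidableEq α] (n ℓ : ℕ) (x y u v : List α)
    (hx : x.length = n) (hy : y.length = n)
    (hu : u.length = ℓ) (hv : v.length = ℓ)
    (huv : ∀ s, s ∈ u → s ∉ v)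
    (huy : ∀ s, s ∈ u → s ∉ y)
    (hvx : ∀ s, s ∈ v → s ∉ x) :
    ED (x ++ u) (y ++ v) = ED x y + ℓ :=
  stmt2_general ℓ x y u v hu hv huv huy hvx
end

section
/- With the construction below: for every tuple s = (s_1,…,s_l) of integers with 1 ≤ s_i ≤ 9 for all i and Σ_{i=1}^l s_i = n/6 + 5, it holds that LCS(x(s) ∘ f(s), y) = n/2 + 5. -/
open List

/-- `LCS(u,v)`: the maximum length of a string that is a subsequence of both `u` and `v`. -/
noncomputable def LCSlen {α : Type*} (u v : List α) : ℕ :=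
  sSup {k : ℕ | ∃ w : List α, w <+ u ∧ w <+ v ∧ w.length = k}

/- The alphabet `{a, b}` is modelled by `Bool`, with `a := false` and `b := true`. -/

/-- `x(s) = b^10 a^{s_1} b^10 a^{s_2} b^10 ⋯ b^10 a^{s_l} b^10`. -/
def xstr (l : ℕ) (s : Fin l → ℕ) : List Bool :=
  List.replicate 10 true ++
    (List.ofFn fun i : Fin l =>
      List.replicate (s i) false ++ List.replicate 10 true).flatten

/-- `f(s) = a^{s_1} b^10 a^{s_2} b^10 ⋯ b^10 a^{s_l} b^10`, i.e. `x(s)` with the leading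
block of `10` `b`'s removed. -/
def fstr (l : ℕ) (s : Fin l → ℕ) : List Bool :=
  (List.ofFn fun i : Fin l =>
    List.replicate (s i) false ++ List.replicate 10 true).flatten

/-- `y = a^{n/3} b^{n/3} a^{n/3}`. -/
def ylcs (n : ℕ) : List Bool :=
  List.replicate (n / 3) false ++ List.replicate (n / 3) true ++ List.replicate (n / 3) false

/-!
Put `d = 10`, `L = l` and `S = Σ sᵢ`. Then `x(s) ∘ f(s)` is the block word
`b^d a^{c₁} b^d ⋯ a^{c_{2L}} b^d` with `c = s ++ s`, and a common subsequence with `y` has the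
form `a^i b^j a^k` with `j ≤ n/3 = d(L+1)`. All `a`'s of `x(s)` followed by all later `b`'s give
length `S + d(L+1)`. Conversely, if `j > 0`, the `a`-blocks strictly inside the stretch used by
`b^j` form a contiguous run `G` of `c` that is lost, so `i + k ≤ 2S - ΣG` while
`j ≤ d(|G|+1)`. Since `G` is a window of the doubled sequence, it extends to a rotation of `s`,
whence `ΣG ≥ S - d(L - |G|)`, and the total is at most `S + d(L+1)`.
-/

section Sublist

variable {α : Type*}

lemma replicate_append_sublist_replicate_append {x : α} {j n : ℕ} {v Y : List α}
    (h : replicate j x ++ v <+ replicate n x ++ Y) :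
    j ≤ n ∨ replicate (j - n) x ++ v <+ Y := by
  induction n generalizing j with
  | zero => exact .inr (by simpa using h)
  | succ n ih =>
    rw [replicate_succ, cons_append, sublist_cons_iff] at h
    rcases h with h | ⟨r, hr, h⟩
    · refine (ih h).imp (by omega) fun h' => Sublist.trans ?_ h'
      exact ((replicate_sublist_replicate x).mpr (by omega)).append_right v
    · cases j with
      | zero => exact .inl (Nat.zero_le _)
      | succ j =>
        rw [replicate_succ, cons_append, cons.injEq] at hr
        rw [← hr.2] at h
        exact (ih h).imp (by omega) (by simpa using ·)

lemma replicate_append_sublist_of_sublist_replicate_append {x y : α} (hxy : x ≠ y)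
    {j n : ℕ} (hj : 0 < j) {v Y : List α} (h : replicate j x ++ v <+ replicate n y ++ Y) :
    replicate j x ++ v <+ Y := by
  induction n with
  | zero => simpa using h
  | succ n ih =>
    rw [replicate_succ (n := n), cons_append, sublist_cons_iff] at h
    rcases h with h | ⟨r, hr, -⟩
    · exact ih h
    · cases j with
      | zero => omega
      | succ j =>
        rw [replicate_succ, cons_append, cons.injEq] at hr
        exact absurd hr.1 hxy

lemma sublist_replicate_append_replicate_append_replicate {w : List α} {x y z : α}
    {p q r : ℕ} (h : w <+ replicate p x ++ replicate q y ++ replicate r z) :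
    ∃ i ≤ p, ∃ j ≤ q, ∃ k ≤ r, w = replicate i x ++ replicate j y ++ replicate k z := by
  obtain ⟨w₁₂, w₃, rfl, h₁₂, h₃⟩ := sublist_append_iff.mp h
  obtain ⟨w₁, w₂, rfl, h₁, h₂⟩ := sublist_append_iff.mp h₁₂
  obtain ⟨i, hi, rfl⟩ := sublist_replicate_iff.mp h₁
  obtain ⟨j, hj, rfl⟩ := sublist_replicate_iff.mp h₂
  obtain ⟨k, hk, rfl⟩ := sublist_replicate_iff.mp h₃
  exact ⟨i, hi, j, hj, k, hk, rfl⟩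

lemma exists_append_isRotated_of_infix_append_self {s G : List α} (hG : G <:+: s ++ s)
    (hlen : G.length ≤ s.length) : ∃ H, G ++ H ~r s := by
  suffices ∃ t, G <+: s.rotate t by
    obtain ⟨t, H, hH⟩ := this
    exact ⟨H, hH ▸ IsRotated.forall s t⟩
  obtain ⟨T, hGT, hT⟩ := infix_iff_prefix_suffix.mp hG
  rw [suffix_iff_eq_drop] at hT
  set t := (s ++ s).length - T.length
  rcases le_total t s.length with ht | ht
  · refine ⟨t, prefix_of_prefix_length_le hGT ?_ (by simpa using hlen)⟩
    rw [rotate_eq_drop_append_take ht, hT, drop_append_of_le_length ht]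
    exact prefix_append_right_inj _ |>.mpr (take_prefix t s)
  · refine ⟨t - s.length, hGT.trans ?_⟩
    rw [rotate_eq_drop_append_take (by simp [t]), hT]
    rw [drop_append, drop_eq_nil_of_le ht, nil_append]
    exact prefix_append _ _

end Sublist

lemma sum_le_sum_add_of_infix_append_self {d : ℕ} {s G : List ℕ} (hs : ∀ c ∈ s, c ≤ d)
    (hG : G <:+: s ++ s) : s.sum ≤ G.sum + d * (s.length - G.length) := by
  have key {G : List ℕ} (hG : G <:+: s ++ s) (hlen : G.length ≤ s.length) :
      s.sum ≤ G.sum + d * (s.length - G.length) := by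
    obtain ⟨H, hH⟩ := exists_append_isRotated_of_infix_append_self hG hlen
    have hsum : G.sum + H.sum = s.sum := by rw [← sum_append, hH.perm.sum_eq]
    have hlen' : G.length + H.length = s.length := by rw [← length_append, hH.perm.length_eq]
    have hHd : H.sum ≤ H.length • d :=
      sum_le_card_nsmul H d fun c hc => hs c (hH.mem_iff.mp (mem_append_right G hc))
    rw [smul_eq_mul, mul_comm] at hHd
    rw [← hlen', Nat.add_sub_cancel_left]
    omega
  rcases le_total G.length s.length with hlen | hlen
  · exact key hG hlen
  · have hG' := key ((take_prefix s.length G).isInfix.trans hG) (by simp)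
    have := (take_prefix s.length G).sublist.sum_le_sum fun _ _ => Nat.zero_le _
    rw [length_take_of_le hlen, Nat.sub_self, mul_zero] at hG'
    rw [Nat.sub_eq_zero_of_le hlen, mul_zero]
    omega

def blocks (d : ℕ) (cs : List ℕ) : List Bool :=
  replicate d true ++ (cs.map fun c => replicate c false ++ replicate d true).flatten

section Blocks

variable {d : ℕ}

lemma blocks_cons (c : ℕ) (cs : List ℕ) :
    blocks d (c :: cs) = replicate d true ++ (replicate c false ++ blocks d cs) := by
  simp [blocks]

lemma blocks_append (s t : List ℕ) :
    blocks d (s ++ t) =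
      (s.map fun c => replicate d true ++ replicate c false).flatten ++ blocks d t := by
  induction s with
  | nil => rfl
  | cons c s ih => rw [cons_append, blocks_cons, ih]; simp

lemma count_false_blocks (cs : List ℕ) : count false (blocks d cs) = cs.sum := by
  induction cs with
  | nil => simp [blocks, count_replicate]
  | cons c cs ih => simp [blocks_cons, ih, count_replicate]

lemma count_true_blocks (cs : List ℕ) : count true (blocks d cs) = d * (cs.length + 1) := by
  induction cs with
  | nil => simp [blocks]
  | cons c cs ih => simp [blocks_cons, ih, count_replicate, mul_add, add_comm]

lemma replicate_append_replicate_sublist_blocks_append (s t : List ℕ) :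
    replicate s.sum false ++ replicate (d * (t.length + 1)) true <+ blocks d (s ++ t) := by
  rw [blocks_append]
  refine Sublist.append ?_ ?_
  · simp [replicate_sublist_iff, count_flatten, count_replicate, Function.comp_def]
  · rw [replicate_sublist_iff, count_true_blocks]

theorem exists_gap_of_sublist_blocks {cs : List ℕ} {i j k : ℕ} (hj : 0 < j)
    (h : replicate i false ++ replicate j true ++ replicate k false <+ blocks d cs) :
    ∃ A G B, cs = A ++ G ++ B ∧ i ≤ A.sum ∧ j ≤ d * (G.length + 1) ∧ k ≤ B.sum := by
  rw [append_assoc] at h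
  induction cs generalizing i j with
  | nil =>
    obtain ⟨rfl, rfl⟩ : i = 0 ∧ k = 0 := by
      simpa [blocks, count_replicate] using h.count_le false
    have hjd : j ≤ d := by simpa [blocks, count_replicate] using h.count_le true
    exact ⟨[], [], [], rfl, le_rfl, by simpa, le_rfl⟩
  | cons c cs ih =>
    rw [blocks_cons] at h
    rcases Nat.eq_zero_or_pos i with rfl | hi
    · rw [replicate_zero, nil_append] at h
      by_cases hjd : j ≤ d
      · have hk : k ≤ c + cs.sum := by
          simpa [count_replicate, count_false_blocks] using h.count_le false
        exact ⟨[], [], c :: cs, rfl, by simp, by simpa, by simpa⟩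
      · have h' := replicate_append_sublist_of_sublist_replicate_append (by decide)
          (by omega) ((replicate_append_sublist_replicate_append h).resolve_left hjd)
        obtain ⟨A, G, B, rfl, -, hG, hB⟩ :=
          ih (i := 0) (j := j - d) (by omega) (by simpa using h')
        refine ⟨[], c :: (A ++ G), B, by simp, by simp, ?_, hB⟩
        have : j ≤ d + d * (G.length + 1) := by omega
        simp only [length_cons, length_append]
        nlinarith
    · have h' := replicate_append_sublist_of_sublist_replicate_append (by decide) hi h
      have hrest : replicate (i - c) false ++ (replicate j true ++ replicate k false) <+
          blocks d cs := by
        rcases replicate_append_sublist_replicate_append h' with hic | hrest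
        · rw [Nat.sub_eq_zero_of_le hic, replicate_zero, nil_append]
          exact replicate_append_sublist_of_sublist_replicate_append (by decide) hj
            ((sublist_append_right _ _).trans h')
        · exact hrest
      obtain ⟨A, G, B, rfl, hA, hG, hB⟩ := ih hj hrest
      exact ⟨c :: A, G, B, rfl, by simp; omega, hG, hB⟩

theorem add_add_le_of_sublist_blocks_append_self {s : List ℕ} (hs : ∀ c ∈ s, c ≤ d)
    (hS : s.sum ≤ d * (s.length + 1)) {i j k : ℕ} (hjd : j ≤ d * (s.length + 1))
    (h : replicate i false ++ replicate j true ++ replicate k false <+ blocks d (s ++ s)) :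
    i + j + k ≤ s.sum + d * (s.length + 1) := by
  rcases Nat.eq_zero_or_pos j with rfl | hj
  · have : i + k ≤ s.sum + s.sum := by simpa [count_false_blocks] using h.count_le false
    omega
  obtain ⟨A, G, B, hAGB, hA, hG, hB⟩ := exists_gap_of_sublist_blocks hj h
  have hsum : A.sum + G.sum + B.sum = s.sum + s.sum := by
    rw [← sum_append, ← sum_append, ← hAGB, sum_append]
  have hgap := sum_le_sum_add_of_infix_append_self hs ⟨A, B, hAGB.symm⟩
  have hj' : j + d * (s.length - G.length) ≤ d * (s.length + 1) := by
    rcases le_total G.length s.length with hl | hl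
    · calc j + d * (s.length - G.length)
          ≤ d * (G.length + 1) + d * (s.length - G.length) := by omega
        _ = d * (s.length + 1) := by rw [← mul_add]; congr 1; omega
    · rw [Nat.sub_eq_zero_of_le hl, mul_zero, add_zero]
      exact hjd
  omega

end Blocks

lemma xstr_append_fstr (l : ℕ) (s : Fin l → ℕ) :
    xstr l s ++ fstr l s = blocks 10 (ofFn s ++ ofFn s) := by
  simp [xstr, fstr, blocks, map_ofFn, Function.comp_def]

lemma LCSlen_eq_of_exists_of_forall_le {α : Type*} {u v : List α} {N : ℕ}
    (hw : ∃ w, w <+ u ∧ w <+ v ∧ w.length = N)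
    (hle : ∀ w, w <+ u → w <+ v → w.length ≤ N) : LCSlen u v = N :=
  IsGreatest.csSup_eq ⟨hw, by rintro _ ⟨w, hu, hv, rfl⟩; exact hle w hu hv⟩

theorem stmt10_general (n : ℕ) (h60 : 60 ∣ n)
    (s : Fin (n / 30 - 1) → ℕ)
    (hs : ∀ i, 1 ≤ s i ∧ s i ≤ 9)
    (hsum : ∑ i, s i = n / 6 + 5) :
    LCSlen (xstr (n / 30 - 1) s ++ fstr (n / 30 - 1) s) (ylcs n) = n / 2 + 5 := by
  obtain ⟨m, rfl⟩ := h60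
  have hm : 0 < m := Nat.pos_of_ne_zero <| by rintro rfl; simp at hsum
  have hlen : (ofFn s).length = 2 * m - 1 := by rw [length_ofFn]; omega
  have hS : (ofFn s).sum = 10 * m + 5 := by rw [sum_ofFn, hsum]; omega
  have hle : ∀ c ∈ ofFn s, c ≤ 10 := by
    simp only [mem_ofFn]
    rintro _ ⟨i, rfl⟩
    exact (hs i).2.trans (by norm_num)
  set P := 10 * ((ofFn s).length + 1) with hP
  have hy : ylcs (60 * m) = replicate P false ++ replicate P true ++ replicate P false := by
    rw [ylcs, hP, hlen, show 60 * m / 3 = 10 * (2 * m - 1 + 1) by omega]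
  rw [xstr_append_fstr, hy]
  apply LCSlen_eq_of_exists_of_forall_le
  · refine ⟨_, replicate_append_replicate_sublist_blocks_append _ _, ?_, by simp; omega⟩
    exact (((replicate_sublist_replicate false).mpr (by omega)).append (Sublist.refl _)).trans
      (sublist_append_left _ _)
  · intro w hwx hwy
    obtain ⟨i, -, j, hj, k, -, rfl⟩ := sublist_replicate_append_replicate_append_replicate hwy
    have := add_add_le_of_sublist_blocks_append_self hle (by omega) hj hwx
    simp only [length_append, length_replicate]
    omega

/-- For `n` divisible by `60`, `l = n/30 − 1`, and every tuple
`s = (s_1,…,s_l)` of integers with `1 ≤ s_i ≤ 9` and `Σ_i s_i = n/6 + 5`, we have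
`LCS(x(s) ∘ f(s), y) = n/2 + 5`. -/
theorem stmt10 (n : ℕ) (hn : 0 < n) (h60 : 60 ∣ n)
    (s : Fin (n / 30 - 1) → ℕ)
    (hs : ∀ i, 1 ≤ s i ∧ s i ≤ 9)
    (hsum : ∑ i, s i = n / 6 + 5) :
    LCSlen (xstr (n / 30 - 1) s ++ fstr (n / 30 - 1) s) (ylcs n) = n / 2 + 5 :=
  stmt10_general n h60 s hs hsum
end

section
/- With the construction below: for any two distinct tuples s^1 = (s^1_1,…,s^1_l) and s^2 = (s^2_1,…,s^2_l) of integers, each satisfying 1 ≤ s^j_i ≤ 9 for all i and Σ_{i=1}^l s^j_i = n/6 + 5, it holds that max{ LCS(x(s^1) ∘ f(s^2), y), LCS(x(s^2) ∘ f(s^1), y) } > n/2 + 5. -/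
open List

def Fb (L : List ℕ) : List Bool :=
  (L.map (fun m => List.replicate m false ++ List.replicate 10 true)).flatten

lemma Fb_cons (m : ℕ) (L : List ℕ) :
    Fb (m :: L) = List.replicate m false ++ (List.replicate 10 true ++ Fb L) := by
  simp [Fb]

lemma Fb_allb (L : List ℕ) : List.replicate (10 * L.length) true <+ Fb L := by
  induction L with
  | nil => simp [Fb]
  | cons m L ih =>
      rw [Fb_cons]
      have h : (10 : ℕ) * (m :: L).length = 10 + 10 * L.length := by
        simp only [List.length_cons]; ring
      rw [h, List.replicate_add]
      exact ((Sublist.refl _).append ih).trans (List.sublist_append_right _ _)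

lemma Fb_alla (L : List ℕ) : List.replicate L.sum false <+ Fb L := by
  induction L with
  | nil => simp [Fb]
  | cons m L ih =>
      rw [Fb_cons, List.sum_cons, List.replicate_add]
      exact (Sublist.refl _).append (ih.trans (List.sublist_append_right _ _))

lemma lemA (L : List ℕ) (k : ℕ) (hk1 : 1 ≤ k) (hk2 : k ≤ L.length) :
    List.replicate ((L.take k).sum) false ++
      List.replicate (10 * (L.length - k) + 10) true <+ Fb L := by
  induction L generalizing k with
  | nil => simp at hk2; omega
  | cons m L ih =>
      rw [Fb_cons]
      rcases Nat.eq_or_lt_of_le hk1 with h1 | h1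
      · have h1' : k = 1 := h1.symm
        subst h1'
        have hsum1 : ((m :: L).take 1).sum = m := by simp
        have hlen : (10 : ℕ) * ((m :: L).length - 1) + 10 = 10 + 10 * L.length := by
          simp only [List.length_cons]; omega
        rw [hsum1, hlen, List.replicate_add]
        refine (Sublist.refl _).append ?_
        exact (Sublist.refl _).append (Fb_allb L)
      · obtain ⟨k', rfl⟩ : ∃ k', k = k' + 1 := ⟨k - 1, by omega⟩
        have hk1' : 1 ≤ k' := by omega
        have hk2' : k' ≤ L.length := by
          simp only [List.length_cons] at hk2; omega
        rw [List.take_succ_cons, List.sum_cons, List.replicate_add, List.append_assoc]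
        refine (Sublist.refl _).append ?_
        have hlen : (m :: L).length - (k' + 1) = L.length - k' := by
          simp only [List.length_cons]; omega
        rw [hlen]
        exact (ih k' hk1' hk2').trans (List.sublist_append_right _ _)

lemma lemB (L : List ℕ) (k : ℕ) (hk2 : k ≤ L.length) :
    List.replicate (10 * k) true ++
      List.replicate ((L.drop k).sum) false <+ Fb L := by
  induction L generalizing k with
  | nil =>
      simp only [List.length_nil, Nat.le_zero] at hk2
      subst hk2; simp [Fb]
  | cons m L ih =>
      rw [Fb_cons]
      cases k with
      | zero =>
          simp only [Nat.mul_zero, List.replicate_zero, List.nil_append, List.drop_zero]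
          rw [List.sum_cons, List.replicate_add]
          exact (Sublist.refl _).append
            ((Fb_alla L).trans (List.sublist_append_right _ _))
      | succ k' =>
          have hk2' : k' ≤ L.length := by
            simp only [List.length_cons] at hk2; omega
          have h10 : (10 : ℕ) * (k' + 1) = 10 + 10 * k' := by ring
          rw [List.drop_succ_cons, h10, List.replicate_add, List.append_assoc]
          refine List.Sublist.trans ?_ (List.sublist_append_right _ _)
          exact (Sublist.refl _).append (ih k' hk2')

lemma le_LCSlen {α : Type*} {u v w : List α} (h1 : w <+ u) (h2 : w <+ v) :
    w.length ≤ LCSlen u v := by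
  refine le_csSup ⟨u.length, ?_⟩ ⟨w, h1, h2, rfl⟩
  rintro k ⟨w', a, b, rfl⟩
  exact a.length_le

lemma sum_take_le (L : List ℕ) (k : ℕ) : (L.take k).sum ≤ L.sum := by
  have h := congrArg List.sum (List.take_append_drop k L)
  rw [List.sum_append] at h
  omega

lemma sum_drop_eq (L : List ℕ) (k : ℕ) : (L.drop k).sum = L.sum - (L.take k).sum := by
  have h := congrArg List.sum (List.take_append_drop k L)
  rw [List.sum_append] at h
  omega

lemma exists_prefix_sum_ne :
    ∀ L₁ L₂ : List ℕ, L₁.length = L₂.length → L₁ ≠ L₂ →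
      ∃ k, 1 ≤ k ∧ k ≤ L₁.length ∧ (L₁.take k).sum ≠ (L₂.take k).sum := by
  intro L₁
  induction L₁ with
  | nil => intro L₂ h hne; cases L₂ <;> simp_all
  | cons a L₁ ih =>
      intro L₂ h hne
      cases L₂ with
      | nil => simp at h
      | cons b L₂ =>
          by_cases hab : a = b
          · subst hab
            have hne' : L₁ ≠ L₂ := by intro h'; exact hne (by rw [h'])
            obtain ⟨k, hk1, hk2, hk3⟩ := ih L₂ (by simpa using h) hne'
            refine ⟨k + 1, by omega, ?_, ?_⟩
            · simp only [List.length_cons]; omega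
            · simp only [List.take_succ_cons, List.sum_cons]
              omega
          · refine ⟨1, le_refl _, ?_, ?_⟩
            · simp only [List.length_cons]; omega
            · simp only [List.take_succ_cons, List.take_zero, List.sum_cons, List.sum_nil]
              omega

lemma main_lem (n m : ℕ) (hm : n = 60 * m) (hm1 : 1 ≤ m)
    (L₁ L₂ : List ℕ) (hl₁ : L₁.length = 2 * m - 1) (hl₂ : L₂.length = 2 * m - 1)
    (hT₁ : L₁.sum = 10 * m + 5) (hT₂ : L₂.sum = 10 * m + 5)
    (k : ℕ) (hk1 : 1 ≤ k) (hk2 : k ≤ 2 * m - 1)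
    (hP : (L₂.take k).sum < (L₁.take k).sum) :
    n / 2 + 5 < LCSlen (List.replicate 10 true ++ (Fb L₁ ++ Fb L₂)) (ylcs n) := by
  have hP₁le : (L₁.take k).sum ≤ 10 * m + 5 := hT₁ ▸ sum_take_le L₁ k
  have hP₂le : (L₂.take k).sum ≤ 10 * m + 5 := hT₂ ▸ sum_take_le L₂ k
  set P₁ := (L₁.take k).sum with hP₁def
  set P₂ := (L₂.take k).sum with hP₂def
  set w : List Bool := List.replicate P₁ false ++
    (List.replicate (20 * m) true ++ List.replicate (10 * m + 5 - P₂) false) with hw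
  have hwu : w <+ List.replicate 10 true ++ (Fb L₁ ++ Fb L₂) := by
    have hsplit : (20 : ℕ) * m = (10 * (L₁.length - k) + 10) + 10 * k := by omega
    have hA := lemA L₁ k hk1 (by omega)
    have hB := lemB L₂ k (by omega)
    rw [sum_drop_eq, hT₂, ← hP₂def] at hB
    rw [← hP₁def] at hA
    have hAB := hA.append hB
    have hweq : w = (List.replicate P₁ false ++
        List.replicate (10 * (L₁.length - k) + 10) true) ++
        (List.replicate (10 * k) true ++ List.replicate (10 * m + 5 - P₂) false) := by
      rw [hw, hsplit]
      simp only [List.replicate_add, List.append_assoc]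
    rw [hweq]
    exact hAB.trans (List.sublist_append_right _ _)
  have hwy : w <+ ylcs n := by
    have h3 : n / 3 = 20 * m := by omega
    rw [ylcs, h3, List.append_assoc, hw]
    refine Sublist.append ((List.replicate_sublist_replicate _).2 (by omega)) ?_
    exact Sublist.append (Sublist.refl _)
      ((List.replicate_sublist_replicate _).2 (by omega))
  have hlen : w.length = P₁ + (20 * m + (10 * m + 5 - P₂)) := by
    simp [hw]
  have hle := le_LCSlen hwu hwy
  rw [hlen] at hle
  omega

/-- For `n` divisible by `60`, `l = n/30 − 1`, and any two distinct
tuples `s¹, s²` of integers, each with `1 ≤ sʲ_i ≤ 9` and `Σ_i sʲ_i = n/6 + 5`, we have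
`max{ LCS(x(s¹) ∘ f(s²), y), LCS(x(s²) ∘ f(s¹), y) } > n/2 + 5`. -/
theorem stmt11 (n : ℕ) (hn : 0 < n) (h60 : 60 ∣ n)
    (s₁ s₂ : Fin (n / 30 - 1) → ℕ) (hne : s₁ ≠ s₂)
    (hs₁ : ∀ i, 1 ≤ s₁ i ∧ s₁ i ≤ 9) (hs₂ : ∀ i, 1 ≤ s₂ i ∧ s₂ i ≤ 9)
    (hsum₁ : ∑ i, s₁ i = n / 6 + 5) (hsum₂ : ∑ i, s₂ i = n / 6 + 5) :
    n / 2 + 5 <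
      max (LCSlen (xstr (n / 30 - 1) s₁ ++ fstr (n / 30 - 1) s₂) (ylcs n))
          (LCSlen (xstr (n / 30 - 1) s₂ ++ fstr (n / 30 - 1) s₁) (ylcs n)) := by
  obtain ⟨m, rfl⟩ := h60
  have hm1 : 1 ≤ m := by omega
  have hlen₁ : (List.ofFn s₁).length = 2 * m - 1 := by
    rw [List.length_ofFn]; omega
  have hlen₂ : (List.ofFn s₂).length = 2 * m - 1 := by
    rw [List.length_ofFn]; omega
  have hsumL₁ : (List.ofFn s₁).sum = 10 * m + 5 := by
    rw [List.sum_ofFn, hsum₁]; omega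
  have hsumL₂ : (List.ofFn s₂).sum = 10 * m + 5 := by
    rw [List.sum_ofFn, hsum₂]; omega
  have hLne : List.ofFn s₁ ≠ List.ofFn s₂ := by
    intro h
    exact hne (List.ofFn_inj.mp h)
  obtain ⟨k, hk1, hk2, hk3⟩ :=
    exists_prefix_sum_ne (List.ofFn s₁) (List.ofFn s₂) (by rw [hlen₁, hlen₂]) hLne
  rw [hlen₁] at hk2
  have hxf : ∀ t₁ t₂ : Fin (60 * m / 30 - 1) → ℕ,
      xstr (60 * m / 30 - 1) t₁ ++ fstr (60 * m / 30 - 1) t₂ =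
        List.replicate 10 true ++ (Fb (List.ofFn t₁) ++ Fb (List.ofFn t₂)) := by
    intro t₁ t₂
    simp only [xstr, fstr, Fb, List.map_ofFn, List.append_assoc]
    rfl
  rcases lt_or_gt_of_ne hk3 with h | h
  · refine lt_of_lt_of_le ?_ (le_max_right _ _)
    rw [hxf s₂ s₁]
    exact main_lem (60 * m) m rfl hm1 _ _ hlen₂ hlen₁ hsumL₂ hsumL₁ k hk1 hk2 h
  · refine lt_of_lt_of_le ?_ (le_max_left _ _)
    rw [hxf s₁ s₂]
    exact main_lem (60 * m) m rfl hm1 _ _ hlen₁ hlen₂ hsumL₁ hsumL₂ k hk1 hk2 h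
end

section
/- Let r, c, l be positive integers. Let B̃ ∈ {0,1}^{r × cr} and define the r × cr matrix B over the natural numbers by B_{i,j} = i if B̃_{i,j} = 1 and B_{i,j} = cr + r + 1 − j if B̃_{i,j} = 0. Let σ(B) be the sequence obtained by concatenating the columns of B (each column read top to bottom, columns in order). Then: (a) if some row of B̃ contains at least m ones, then σ(B) contains a non-decreasing subsequence of length at least m; (b) if in every row of B̃ any two ones in columns j < j' satisfy j' − j ≥ l + 1, then every non-decreasing subsequence of σ(B) has length at most 2r + cr/l. -/
/-!
A subsequence of `σ(B)` is the image of a set of cells listed in column-major order, and a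
non-decreasing one splits into its cells with `B̃ = 1` and those with `B̃ = 0`. Zeros have value
`cr + r + 1 − j`, decreasing in the column, so the zeros of a non-decreasing subsequence lie in
one column: at most `r` of them. Ones have value equal to their row, and along the subsequence the
potential `l · row + column` grows by at least `l` (a larger row adds `l`; within a row the gap
condition does), while it stays below `l r + cr`: at most `r + cr / l` ones.
For (a), the value `i` occurs in every column where row `i` of `B̃` has a one.
-/

open List

/-- Column concatenation `σ(B)` of an `r × t` matrix `B`: column `1` read top to bottom,
then column `2`, and so on. -/
def sigmaB (r t : ℕ) (B : Fin r → Fin t → ℕ) : List ℕ :=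
  (List.ofFn fun j : Fin t => List.ofFn fun i : Fin r => B i j).flatten

/-- Cells are pairs `(column, row)`, so that the reading order of `sigmaB` is lexicographic. -/
def colMajorCells (r t : ℕ) : List (Fin t × Fin r) :=
  (List.ofFn fun j : Fin t => List.ofFn fun i : Fin r => (j, i)).flatten

theorem sigmaB_eq_map_colMajorCells (r t : ℕ) (B : Fin r → Fin t → ℕ) :
    sigmaB r t B = (colMajorCells r t).map fun p => B p.2 p.1 := by
  simp only [sigmaB, colMajorCells, map_flatten, map_ofFn, Function.comp_def]

theorem pairwise_lex_colMajorCells (r t : ℕ) :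
    (colMajorCells r t).Pairwise (Prod.Lex (· < ·) (· < ·)) := by
  rw [colMajorCells, pairwise_flatten, pairwise_ofFn]
  refine ⟨fun col hcol => ?_, fun j j' hjj' x hx y hy => ?_⟩
  · obtain ⟨j, rfl⟩ := mem_ofFn.mp hcol
    exact pairwise_ofFn.mpr fun i i' hii' => Prod.Lex.right _ hii'
  · obtain ⟨i, rfl⟩ := mem_ofFn.mp hx
    obtain ⟨i', rfl⟩ := mem_ofFn.mp hy
    exact Prod.Lex.left _ _ hjj'

theorem replicate_sublist_sigmaB {r t m v : ℕ} (B : Fin r → Fin t → ℕ) (i : Fin r)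
    (hm : m ≤ (Finset.univ.filter fun j => B i j = v).card) :
    replicate m v <+ sigmaB r t B := by
  rw [Finset.card_filter] at hm
  rw [replicate_sublist_iff, sigmaB, count_flatten, map_ofFn, sum_ofFn]
  refine hm.trans (Finset.sum_le_sum fun j _ => ?_)
  split_ifs with hv
  · exact count_pos_iff.mpr (mem_ofFn.mpr ⟨i, hv⟩)
  · exact Nat.zero_le _

theorem List.Pairwise.add_mul_length_le {l a N : ℕ} {xs : List ℕ}
    (h : xs.Pairwise (· + l ≤ ·)) (ha : ∀ x ∈ xs, a ≤ x) (hN : ∀ x ∈ xs, x + l ≤ N)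
    (haN : a ≤ N) : a + l * xs.length ≤ N := by
  induction xs generalizing a with
  | nil => simpa using haN
  | cons x xs ih =>
    obtain ⟨hx, hxs⟩ := pairwise_cons.mp h
    have := ih hxs hx (fun y hy => hN y (mem_cons_of_mem x hy)) (hN x mem_cons_self)
    have := ha x mem_cons_self
    rw [length_cons, Nat.mul_succ]
    omega

/-- The matrix `B` built from `B̃`, with `0`-based indices. -/
def encodeBoolMatrix {r t : ℕ} (Bt : Fin r → Fin t → Bool) : Fin r → Fin t → ℕ :=
  fun i j => if Bt i j then i.val + 1 else t + r - j.val

section encodeBoolMatrix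

variable {r t : ℕ} (Bt : Fin r → Fin t → Bool)

theorem encodeBoolMatrix_zeros_length_le {S : List (Fin t × Fin r)}
    (hS : S.Pairwise fun p q => Prod.Lex (· < ·) (· < ·) p q ∧
      encodeBoolMatrix Bt p.2 p.1 ≤ encodeBoolMatrix Bt q.2 q.1)
    (hzero : ∀ p ∈ S, Bt p.2 p.1 = false) : S.length ≤ r := by
  have hrows : (S.map Prod.snd).Pairwise (· < ·) := by
    refine pairwise_map.mpr (hS.imp_of_mem fun {p q} hp hq ⟨hlex, hle⟩ => ?_)
    simp only [encodeBoolMatrix, hzero p hp, hzero q hq, Bool.false_eq_true, if_false] at hle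
    have := p.1.isLt
    rcases Prod.lex_def.mp hlex with hcol | ⟨-, hrow⟩
    · exact absurd hle (by rw [Fin.lt_def] at hcol; omega)
    · exact hrow
  simpa using Nodup.length_le_card (hrows.imp ne_of_lt)

theorem encodeBoolMatrix_ones_mul_length_le {l : ℕ}
    (hgap : ∀ (i : Fin r) (j j' : Fin t), j < j' → Bt i j → Bt i j' → l ≤ j'.val - j.val)
    {S : List (Fin t × Fin r)}
    (hS : S.Pairwise fun p q => Prod.Lex (· < ·) (· < ·) p q ∧
      encodeBoolMatrix Bt p.2 p.1 ≤ encodeBoolMatrix Bt q.2 q.1)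
    (hone : ∀ p ∈ S, Bt p.2 p.1 = true) : l * S.length ≤ l * r + t := by
  set φ : Fin t × Fin r → ℕ := fun p => l * p.2 + p.1
  have hφ : (S.map φ).Pairwise (· + l ≤ ·) := by
    refine pairwise_map.mpr (hS.imp_of_mem fun {p q} hp hq ⟨hlex, hle⟩ => ?_)
    simp only [encodeBoolMatrix, hone p hp, hone q hq, if_true] at hle
    have hrow_lt (h : p.2 < q.2) : l * p.2 + l ≤ l * q.2 := by
      simpa [Nat.mul_succ] using Nat.mul_le_mul_left l (Nat.succ_le_of_lt h)
    simp only [φ]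
    rcases Prod.lex_def.mp hlex with hcol | ⟨hcol, hrow⟩
    · rcases (Nat.le_of_succ_le_succ hle).lt_or_eq with hrow | hrow
      · have := hrow_lt hrow
        omega
      · have := hgap p.2 p.1 q.1 hcol (hone p hp) (Fin.ext hrow ▸ hone q hq)
        rw [hrow]
        omega
    · have := hrow_lt hrow
      omega
  have hbound : ∀ x ∈ S.map φ, x + l ≤ l * r + t := by
    intro x hx
    obtain ⟨p, -, rfl⟩ := mem_map.mp hx
    have := Nat.mul_le_mul_left l (Nat.succ_le_of_lt p.2.isLt)
    rw [Nat.mul_succ] at this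
    have := p.1.isLt
    simp only [φ]
    omega
  simpa using hφ.add_mul_length_le (a := 0) (by simp) hbound (Nat.zero_le _)

theorem mul_length_le_of_sublist_sigmaB_encodeBoolMatrix {l : ℕ}
    (hgap : ∀ (i : Fin r) (j j' : Fin t), j < j' → Bt i j → Bt i j' → l ≤ j'.val - j.val)
    {w : List ℕ} (hw : w <+ sigmaB r t (encodeBoolMatrix Bt)) (hmono : w.Pairwise (· ≤ ·)) :
    l * w.length ≤ 2 * (l * r) + t := by
  rw [sigmaB_eq_map_colMajorCells] at hw
  obtain ⟨S, hS, rfl⟩ := sublist_map_iff.mp hw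
  have hpair := ((pairwise_lex_colMajorCells r t).sublist hS).and (pairwise_map.mp hmono)
  have hones := encodeBoolMatrix_ones_mul_length_le Bt hgap
    (hpair.sublist filter_sublist) (S := S.filter fun p => Bt p.2 p.1) (by simp)
  have hzeros := encodeBoolMatrix_zeros_length_le Bt
    (hpair.sublist filter_sublist) (S := S.filter fun p => !Bt p.2 p.1) (by simp)
  rw [length_map, length_eq_length_filter_add fun p => Bt p.2 p.1, mul_add]
  have := Nat.mul_le_mul_left l hzeros
  omega

end encodeBoolMatrix

theorem stmt13_general (r c l : ℕ) (hl : 0 < l)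
    (Bt : Fin r → Fin (c * r) → Bool)
    (B : Fin r → Fin (c * r) → ℕ)
    (hB : ∀ i j, B i j = if Bt i j then i.val + 1 else c * r + r - j.val) :
    (∀ m : ℕ, (∃ i : Fin r,
        m ≤ (Finset.univ.filter fun j : Fin (c * r) => Bt i j = true).card) →
      ∃ w : List ℕ, w <+ sigmaB r (c * r) B ∧ w.Chain' (· ≤ ·) ∧ m ≤ w.length) ∧
    ((∀ (i : Fin r) (j j' : Fin (c * r)),
        j < j' → Bt i j = true → Bt i j' = true → l + 1 ≤ j'.val - j.val) →
      ∀ w : List ℕ, w <+ sigmaB r (c * r) B → w.Chain' (· ≤ ·) →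
        (w.length : ℝ) ≤ 2 * (r : ℝ) + (c : ℝ) * (r : ℝ) / (l : ℝ)) := by
  obtain rfl : B = encodeBoolMatrix Bt := funext fun i => funext (hB i)
  refine ⟨fun m ⟨i, hm⟩ => ⟨replicate m (i.val + 1), ?_, ?_, by simp⟩, fun hgap w hw hchain => ?_⟩
  · have hones_le : (Finset.univ.filter fun j => Bt i j = true).card ≤
        (Finset.univ.filter fun j => encodeBoolMatrix Bt i j = i.val + 1).card :=
      Finset.card_le_card fun j => by simp +contextual [encodeBoolMatrix]
    exact replicate_sublist_sigmaB _ i (hm.trans hones_le)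
  · exact isChain_iff_pairwise.mpr (pairwise_replicate.mpr (Or.inr le_rfl))
  · have key := mul_length_le_of_sublist_sigmaB_encodeBoolMatrix Bt
      (fun i j j' hjj' h h' => (hgap i j j' hjj' h h').trans' l.le_succ) hw
      (isChain_iff_pairwise.mp hchain)
    have hl' : (0 : ℝ) < l := by exact_mod_cast hl
    have keyR : (l : ℝ) * w.length ≤ 2 * (l * r) + c * r := by exact_mod_cast key
    rw [← sub_le_iff_le_add', le_div_iff₀ hl']
    linarith

/-- Let `B̃ ∈ {0,1}^{r × cr}` and define `B` by `B_{i,j} = i` if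
`B̃_{i,j} = 1` and `B_{i,j} = cr + r + 1 − j` if `B̃_{i,j} = 0` (with `1`-based indices).
(a) If some row of `B̃` contains at least `m` ones, then `σ(B)` contains a
non-decreasing subsequence of length at least `m`.
(b) If in every row of `B̃` any two ones in columns `j < j'` satisfy `j' − j ≥ l + 1`,
then every non-decreasing subsequence of `σ(B)` has length at most `2r + cr/l`. -/
theorem stmt13 (r c l : ℕ) (hr : 0 < r) (hc : 0 < c) (hl : 0 < l)
    (Bt : Fin r → Fin (c * r) → Bool)
    (B : Fin r → Fin (c * r) → ℕ)
    (hB : ∀ i j, B i j = if Bt i j then i.val + 1 else c * r + r - j.val) :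
    (∀ m : ℕ, (∃ i : Fin r,
        m ≤ (Finset.univ.filter fun j : Fin (c * r) => Bt i j = true).card) →
      ∃ w : List ℕ, w <+ sigmaB r (c * r) B ∧ w.Chain' (· ≤ ·) ∧ m ≤ w.length) ∧
    ((∀ (i : Fin r) (j j' : Fin (c * r)),
        j < j' → Bt i j = true → Bt i j' = true → l + 1 ≤ j'.val - j.val) →
      ∀ w : List ℕ, w <+ sigmaB r (c * r) B → w.Chain' (· ≤ ·) →
        (w.length : ℝ) ≤ 2 * (r : ℝ) + (c : ℝ) * (r : ℝ) / (l : ℝ)) :=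
  stmt13_general r c l hl Bt B hB
end

section
/- For every integer l ≥ 1 and every real α with 1/2 < α < 1 − 1/e, there exist an integer k ≥ 2, a real c > 1, and an integer t_0 such that for every integer t ≥ t_0 there exists a family F ⊆ {0,1}^t with the following properties: (i) |F| ≥ c^t; (ii) for every a ∈ F, any two positions p < q with a_p = a_q = 1 satisfy q − p ≥ l + 1 (i.e., there are at least l zeros between any two ones of a); (iii) for every k-element subset {a^1,…,a^k} ⊆ F, the coordinatewise OR b defined by b_i = max_{1 ≤ j ≤ k} a^j_i has at least α·t coordinates equal to 1. -/
/-!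
Put `m = l + 1` and choose a code `C ⊆ (Fin m)^n` in which distinct words agree in fewer than
`s ≈ 6n/(5m)` coordinates. A maximal such code covers `(Fin m)^n` by the balls
`{y | s ≤ agreements p y}`, and weighting `y` by `(6/5)^(agreements p y)` bounds each ball by
`(m + 1/5)^n / (6/5)^s`, so `|C| ≥ exp (n/(100m))`.

A word `p` becomes a binary string made of `n` blocks of `100` periods of length `m`: in block `b`
the ones sit at offset `p b` of every period but the last, so any two ones are at least `m` apart.
The ones of the OR of `k = 100m` such strings are `99` copies of the pairs `(b, p b)` the words
cover. By Cauchy–Schwarz over these pairs, `(kn)² ≤ #pairs · ∑_{p,q} agreements p q`, and the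
agreement bound forces `#pairs ≥ mn / 1.22`; so the OR has at least `0.64 t > (1 - 1/e) t` ones.
-/

open Finset

section Agreements

variable {ι β : Type*} [Fintype ι] [DecidableEq β]

def agreements (p q : ι → β) : ℕ := #{i | p i = q i}

lemma agreements_comm (p q : ι → β) : agreements p q = agreements q p := by
  simp only [agreements, eq_comm]

@[simp] lemma agreements_self (p : ι → β) : agreements p p = Fintype.card ι := by
  simp [agreements]

variable [DecidableEq ι] [Fintype β]

lemma sum_pow_agreements (x : ℝ) (p : ι → β) :
    ∑ y : ι → β, x ^ agreements p y = (Fintype.card β + x - 1) ^ Fintype.card ι := by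
  have hpow (y : ι → β) : x ^ agreements p y = ∏ i, if p i = y i then x else 1 := by
    rw [prod_ite, prod_const, prod_const_one, mul_one, agreements]
  have hrow (i : ι) : ∑ v : β, (if p i = v then x else 1) = Fintype.card β + x - 1 := by
    have (v : β) : (if p i = v then x else 1) = 1 + if p i = v then x - 1 else 0 := by
      split_ifs <;> ring
    simp only [this, sum_add_distrib, sum_ite_eq, mem_univ, if_true, sum_const, card_univ,
      nsmul_eq_mul, mul_one]
    ring
  simp_rw [hpow]
  rw [← Fintype.prod_sum fun i v => if p i = v then x else 1]
  simp_rw [hrow, prod_const, card_univ]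

lemma card_le_agreements_mul_pow_le {x : ℝ} (hx : 1 ≤ x) (p : ι → β) (s : ℕ) :
    #{y | s ≤ agreements p y} * x ^ s ≤ (Fintype.card β + x - 1) ^ Fintype.card ι := by
  rw [← sum_pow_agreements, ← nsmul_eq_mul, ← sum_const]
  calc ∑ _y ∈ {y | s ≤ agreements p y}, x ^ s
      ≤ ∑ y ∈ {y | s ≤ agreements p y}, x ^ agreements p y :=
        sum_le_sum fun y hy => pow_le_pow_right₀ hx (mem_filter.mp hy).2
    _ ≤ ∑ y, x ^ agreements p y :=
        sum_le_sum_of_subset_of_nonneg (subset_univ _) fun _ _ _ => by positivity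

end Agreements

theorem Finset.exists_pairwise_not_and_forall_exists {α : Type*} [Finite α] (r : α → α → Prop)
    (hr : ∀ a b, r a b → r b a) :
    ∃ C : Finset α, (C : Set α).Pairwise (fun a b => ¬ r a b) ∧ ∀ y ∉ C, ∃ c ∈ C, r c y := by
  classical
  set good := {C : Finset α | (C : Set α).Pairwise fun a b => ¬ r a b}
  obtain ⟨C, hC⟩ := (Set.toFinite good).exists_maximal ⟨∅, by simp [good]⟩
  refine ⟨C, hC.prop, fun y hy => ?_⟩
  by_contra! h
  have hins : insert y C ∈ good := by
    simp only [good, Set.mem_ofPred_eq, coe_insert, Set.pairwise_insert]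
    exact ⟨hC.prop, fun c hc _ => ⟨fun h' => h c hc (hr _ _ h'), h c hc⟩⟩
  exact hy (hC.eq_of_le hins (subset_insert _ _) ▸ mem_insert_self y C)

section Codes

variable {ι β : Type*} [Fintype ι] [DecidableEq ι] [Fintype β] [DecidableEq β]

lemma exists_code {x : ℝ} (hx : 1 ≤ x) {s : ℕ} (hs : s ≤ Fintype.card ι) :
    ∃ C : Finset (ι → β), (C : Set (ι → β)).Pairwise (fun p q => agreements p q < s) ∧
      Fintype.card β ^ Fintype.card ι * x ^ s ≤ #C * (Fintype.card β + x - 1) ^ Fintype.card ι := by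
  obtain ⟨C, hpair, hmax⟩ :=
    exists_pairwise_not_and_forall_exists (fun p q : ι → β => s ≤ agreements p q)
    fun p q h => agreements_comm p q ▸ h
  refine ⟨C, hpair.mono' fun _ _ => not_le.mp, ?_⟩
  have hcover : univ ⊆ C.biUnion fun c => {y | s ≤ agreements c y} := by
    intro y _
    simp only [mem_biUnion, mem_filter, mem_univ, true_and]
    by_cases hy : y ∈ C
    · exact ⟨y, hy, by simpa using hs⟩
    · exact hmax y hy
  calc (Fintype.card β ^ Fintype.card ι : ℝ) * x ^ s = #(univ : Finset (ι → β)) * x ^ s := by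
        simp
    _ ≤ (∑ c ∈ C, #{y | s ≤ agreements c y} : ℕ) * x ^ s := by
        gcongr
        exact (card_le_card hcover).trans card_biUnion_le
    _ = ∑ c ∈ C, #{y | s ≤ agreements c y} * x ^ s := by push_cast; rw [sum_mul]
    _ ≤ ∑ _c ∈ C, (Fintype.card β + x - 1) ^ Fintype.card ι :=
        sum_le_sum fun c _ => card_le_agreements_mul_pow_le hx c s
    _ = _ := by rw [sum_const, nsmul_eq_mul]

end Codes

lemma exp_nine_div_fifty_le : Real.exp (9 / 50) ≤ 6 / 5 := by
  refine le_of_pow_le_pow_left₀ (n := 50) (by norm_num) (by norm_num) ?_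
  calc Real.exp (9 / 50) ^ 50 = Real.exp 1 ^ 9 := by
        rw [← Real.exp_nat_mul, ← Real.exp_nat_mul]; norm_num
    _ ≤ 2.7182818286 ^ 9 := by gcongr; exact Real.exp_one_lt_d9.le
    _ ≤ (6 / 5) ^ 50 := by norm_num

lemma exists_code_exp_le_card {n m s : ℕ} (hm : 0 < m) (hs : s ≤ n) (hsn : 6 * n ≤ 5 * m * s) :
    ∃ C : Finset (Fin n → Fin m), (C : Set (Fin n → Fin m)).Pairwise
      (fun p q => agreements p q < s) ∧ Real.exp (n / (100 * m)) ≤ #C := by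
  obtain ⟨C, hpair, hcard⟩ := exists_code (ι := Fin n) (β := Fin m) (x := 6 / 5) (by norm_num)
    (by simpa using hs)
  refine ⟨C, hpair, ?_⟩
  simp only [Fintype.card_fin] at hcard
  have hm' : (0 : ℝ) < m := by exact_mod_cast hm
  have hsplit : ((m : ℝ) + 6 / 5 - 1) ^ n = m ^ n * (1 + 1 / (5 * m)) ^ n := by
    rw [← mul_pow]; field_simp; ring
  have hbase : (1 + 1 / (5 * m) : ℝ) ^ n ≤ Real.exp (n / (5 * m)) := by
    calc (1 + 1 / (5 * m) : ℝ) ^ n ≤ Real.exp (1 / (5 * m)) ^ n := by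
          gcongr; linarith [Real.add_one_le_exp (1 / (5 * m : ℝ))]
      _ = Real.exp (n / (5 * m)) := by rw [← Real.exp_nat_mul]; ring_nf
  have hexp : Real.exp (n / (100 * m)) * Real.exp (n / (5 * m)) ≤ (6 / 5) ^ s := by
    have h6 : (6 : ℝ) * n ≤ 5 * m * s := by exact_mod_cast hsn
    calc Real.exp (n / (100 * m)) * Real.exp (n / (5 * m)) ≤ Real.exp (9 / 50 * s) := by
          rw [← Real.exp_add, Real.exp_le_exp, ← sub_nonneg]
          have : 9 / 50 * (s : ℝ) - (n / (100 * m) + n / (5 * m)) =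
              (18 * m * s - 21 * n) / (100 * m) := by
            field_simp; ring
          rw [this]; apply div_nonneg <;> nlinarith
      _ = Real.exp (9 / 50) ^ s := by rw [← Real.exp_nat_mul]; ring_nf
      _ ≤ (6 / 5) ^ s := by gcongr; exact exp_nine_div_fifty_le
  have hpos : (0 : ℝ) < m ^ n * (1 + 1 / (5 * m)) ^ n := by positivity
  refine le_of_mul_le_mul_right ?_ hpos
  calc Real.exp (n / (100 * m)) * (m ^ n * (1 + 1 / (5 * m)) ^ n)
      ≤ Real.exp (n / (100 * m)) * (m ^ n * Real.exp (n / (5 * m))) := by gcongr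
    _ ≤ m ^ n * (6 / 5) ^ s := by nlinarith [pow_pos hm' n]
    _ ≤ #C * (m ^ n * (1 + 1 / (5 * m)) ^ n) := by rw [← hsplit]; exact hcard

lemma card_eq_sum_boole_of_subset {γ : Type*} [DecidableEq γ] {S U : Finset γ} (h : S ⊆ U) :
    #S = ∑ x ∈ U, if x ∈ S then 1 else 0 := by
  rw [sum_boole, filter_mem_eq_inter, inter_eq_right.mpr h, Nat.cast_id]

theorem sq_sum_card_le_card_biUnion_mul {α γ : Type*} [DecidableEq γ] (T : Finset α)
    (A : α → Finset γ) :
    (∑ p ∈ T, #(A p)) ^ 2 ≤ #(T.biUnion A) * ∑ p ∈ T, ∑ q ∈ T, #(A p ∩ A q) := by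
  set U := T.biUnion A
  set M : γ → ℕ := fun x => ∑ p ∈ T, if x ∈ A p then 1 else 0
  have hsub {p} (hp : p ∈ T) : A p ⊆ U := subset_biUnion_of_mem A hp
  have hsum : ∑ p ∈ T, #(A p) = ∑ x ∈ U, M x := by
    rw [sum_congr rfl fun p hp => card_eq_sum_boole_of_subset (hsub hp)]
    exact sum_comm
  have hsq : ∑ p ∈ T, ∑ q ∈ T, #(A p ∩ A q) = ∑ x ∈ U, M x ^ 2 := by
    simp_rw [sq, M, sum_mul_sum, boole_mul, ← ite_and, ← mem_inter]
    rw [sum_comm (s := U)]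
    refine sum_congr rfl fun p hp => ?_
    rw [sum_comm (s := U)]
    exact sum_congr rfl fun q _ =>
      card_eq_sum_boole_of_subset (inter_subset_left.trans (hsub hp))
  rw [hsum, hsq]
  exact sq_sum_le_card_mul_sum_sq

section Graph

variable {ι β : Type*} [Fintype ι] [DecidableEq ι] [DecidableEq β]

def graph (p : ι → β) : Finset (ι × β) := univ.image fun i => (i, p i)

lemma mem_graph {p : ι → β} {x : ι × β} : x ∈ graph p ↔ p x.1 = x.2 := by
  constructor
  · simp only [graph, mem_image, mem_univ, true_and]
    rintro ⟨i, rfl⟩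
    rfl
  · intro h
    exact mem_image.mpr ⟨x.1, mem_univ _, by rw [h]⟩

lemma card_graph (p : ι → β) : #(graph p) = Fintype.card ι :=
  card_image_of_injective _ fun _ _ h => (Prod.mk.inj h).1

lemma card_graph_inter_graph (p q : ι → β) : #(graph p ∩ graph q) = agreements p q := by
  have : graph p ∩ graph q = ({i | p i = q i} : Finset ι).image fun i => (i, p i) := by
    ext ⟨i, v⟩
    simp only [mem_inter, mem_graph, mem_image, mem_filter, mem_univ, true_and,
      Prod.mk.injEq]
    constructor
    · rintro ⟨rfl, h⟩; exact ⟨i, h.symm, rfl, rfl⟩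
    · rintro ⟨j, h, rfl, rfl⟩; exact ⟨rfl, h.symm⟩
  rw [this, card_image_of_injective _ fun _ _ h => (Prod.mk.inj h).1, agreements]

lemma graph_injective : Function.Injective (graph : (ι → β) → Finset (ι × β)) := by
  intro p q h
  funext i
  exact mem_graph.mp (h ▸ mem_graph.mpr rfl : (i, p i) ∈ graph q) |>.symm

lemma sq_card_mul_le_card_biUnion_graph_mul {T : Finset (ι → β)} {s : ℕ}
    (hT : (T : Set (ι → β)).Pairwise fun p q => agreements p q < s) :
    (#T * Fintype.card ι) ^ 2 ≤ #(T.biUnion graph) * (#T * (Fintype.card ι + #T * s)) := by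
  have hrow {p} (hp : p ∈ T) : ∑ q ∈ T, agreements p q ≤ Fintype.card ι + #T * s := by
    rw [← add_sum_erase T _ hp, agreements_self]
    gcongr
    calc ∑ q ∈ T.erase p, agreements p q ≤ ∑ _q ∈ T.erase p, s :=
          sum_le_sum fun q hq => (hT hp (mem_of_mem_erase hq) (ne_of_mem_erase hq).symm).le
      _ ≤ #T * s := by
        rw [sum_const, smul_eq_mul]
        exact Nat.mul_le_mul_right s card_erase_le
  calc (#T * Fintype.card ι) ^ 2 = (∑ p ∈ T, #(graph p)) ^ 2 := by
        simp [card_graph]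
    _ ≤ #(T.biUnion graph) * ∑ p ∈ T, ∑ q ∈ T, agreements p q := by
        simpa only [card_graph_inter_graph] using sq_sum_card_le_card_biUnion_mul T graph
    _ ≤ #(T.biUnion graph) * (#T * (Fintype.card ι + #T * s)) := by
        gcongr
        exact (sum_le_sum fun p hp => hrow hp).trans (by rw [sum_const, smul_eq_mul])

end Graph

lemma eq_and_eq_of_mul_add_eq_mul_add {a b c d k : ℕ} (hb : b < k) (hd : d < k)
    (h : a * k + b = c * k + d) : a = c ∧ b = d := by
  have h₁ := (Nat.div_mod_unique (b := k) (a := a * k + b) (by omega)).mpr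
    ⟨(by ring : b + k * a = a * k + b), hb⟩
  have h₂ := (Nat.div_mod_unique (b := k) (a := a * k + b) (by omega)).mpr
    ⟨(by rw [h]; ring : d + k * c = a * k + b), hd⟩
  omega

lemma mul_add_add_le_mul_add {a b c d k : ℕ} (hb : b < k) (hac : a + 2 ≤ c) :
    a * k + b + k ≤ c * k + d := by
  have := Nat.mul_le_mul_right k hac
  rw [add_mul] at this
  omega

lemma mul_add_add_two_le {b b' j j' R : ℕ} (hj : j < R - 1) (hb : b < b') :
    b * R + j + 2 ≤ b' * R + j' := by
  have := Nat.mul_le_mul_right R hb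
  rw [Nat.succ_mul] at this
  omega

section BlockCode

variable {n m : ℕ} (R : ℕ)

/-- Block `b` consists of `R` periods of length `m`; its last period stays empty, which keeps the
ones of consecutive blocks more than `m` apart. -/
def slot (x : (Fin n × Fin m) × Fin (R - 1)) : ℕ := (x.1.1 * R + x.2) * m + x.1.2

lemma slot_injective : Function.Injective (slot (n := n) (m := m) R) := by
  rintro ⟨⟨b, v⟩, j⟩ ⟨⟨b', v'⟩, j'⟩ h
  obtain ⟨hq, hv⟩ := eq_and_eq_of_mul_add_eq_mul_add v.isLt v'.isLt h
  obtain ⟨hb, hj⟩ := eq_and_eq_of_mul_add_eq_mul_add (by omega) (by omega) hq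
  simp only [Prod.mk.injEq, Fin.ext_iff]
  exact ⟨⟨hb, hv⟩, hj⟩

lemma slot_lt (x : (Fin n × Fin m) × Fin (R - 1)) : slot R x < R * m * n := by
  have hq : x.1.1 * R + x.2 + 1 ≤ n * R := by
    have := Nat.mul_le_mul_right R x.1.1.isLt
    rw [Nat.succ_mul] at this
    omega
  calc slot R x < (x.1.1 * R + x.2 + 1) * m := by unfold slot; rw [add_one_mul]; omega
    _ ≤ n * R * m := Nat.mul_le_mul_right m hq
    _ = R * m * n := by ring

lemma slot_add_le_slot (p : Fin n → Fin m) {x y : (Fin n × Fin m) × Fin (R - 1)}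
    (hx : x.1 ∈ graph p) (hy : y.1 ∈ graph p) (hxy : slot R x < slot R y) :
    slot R x + m ≤ slot R y := by
  obtain ⟨⟨b, v⟩, j⟩ := x
  obtain ⟨⟨b', v'⟩, j'⟩ := y
  rw [mem_graph] at hx hy
  dsimp only at hx hy
  subst hx hy
  unfold slot at hxy ⊢
  dsimp only at hxy ⊢
  rcases lt_trichotomy b b' with hbb | rfl | hbb
  · exact mul_add_add_le_mul_add (p b).isLt (mul_add_add_two_le j.isLt hbb)
  · have hjj : (b : ℕ) * R + j < b * R + j' := Nat.lt_of_mul_lt_mul_right (a := m) (by omega)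
    have := Nat.mul_le_mul_right m hjj
    rw [Nat.succ_mul] at this
    omega
  · have := mul_add_add_le_mul_add (d := p b) (p b').isLt
      (mul_add_add_two_le (j' := j) j'.isLt hbb)
    omega


def blockSupport (p : Fin n → Fin m) : Finset ℕ := (graph p ×ˢ univ).image (slot R)

def blockString (t : ℕ) (p : Fin n → Fin m) : Fin t → Bool :=
  fun i => decide ((i : ℕ) ∈ blockSupport R p)

variable {R}

lemma blockSupport_subset_range (p : Fin n → Fin m) : blockSupport R p ⊆ range (R * m * n) := by
  intro x hx
  obtain ⟨y, -, rfl⟩ := mem_image.mp hx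
  exact mem_range.mpr (slot_lt R y)

lemma add_le_of_mem_blockSupport {p : Fin n → Fin m} {x y : ℕ} (hx : x ∈ blockSupport R p)
    (hy : y ∈ blockSupport R p) (hxy : x < y) : x + m ≤ y := by
  obtain ⟨x, hx', rfl⟩ := mem_image.mp hx
  obtain ⟨y, hy', rfl⟩ := mem_image.mp hy
  exact slot_add_le_slot R p (mem_product.mp hx').1 (mem_product.mp hy').1 hxy

lemma blockSupport_injective (hR : 2 ≤ R) :
    Function.Injective (blockSupport (n := n) (m := m) R) := by
  intro p q h
  have hne : (univ : Finset (Fin (R - 1))).Nonempty := univ_nonempty_iff.mpr ⟨⟨0, by omega⟩⟩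
  have hprod := image_injective (slot_injective R) h
  apply graph_injective
  rw [← product_image_fst (s := graph p) hne, ← product_image_fst (s := graph q) hne, hprod]

lemma blockString_injective {t : ℕ} (hR : 2 ≤ R) (ht : R * m * n ≤ t) :
    Function.Injective (blockString (n := n) (m := m) R t) := by
  intro p q h
  apply blockSupport_injective hR
  ext x
  by_cases hx : x < t
  · simpa [blockString] using congrFun h ⟨x, hx⟩
  · have hx' : ¬ x < R * m * n := by omega
    constructor <;> intro hmem <;>
      exact absurd (mem_range.mp (blockSupport_subset_range _ hmem)) hx'

lemma ncard_blockString_or {t : ℕ} (ht : R * m * n ≤ t) (T : Finset (Fin n → Fin m)) :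
    {i : Fin t | ∃ a ∈ T.image (blockString R t), a i = true}.ncard =
      #(T.biUnion graph) * (R - 1) := by
  have hset : {i : Fin t | ∃ a ∈ T.image (blockString R t), a i = true} =
      Fin.val ⁻¹' ↑(T.biUnion (blockSupport R)) := by
    ext i
    simp [blockString]
  have hunion : T.biUnion (blockSupport R) = (T.biUnion graph ×ˢ univ).image (slot R) := by
    ext x
    simp only [blockSupport, mem_biUnion, mem_image, mem_product]
    constructor
    · rintro ⟨p, hp, y, hy, rfl⟩
      exact ⟨y, ⟨⟨p, hp, hy.1⟩, hy.2⟩, rfl⟩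
    · rintro ⟨y, ⟨⟨p, hp, hy⟩, hy'⟩, rfl⟩
      exact ⟨p, hp, y, ⟨hy, hy'⟩, rfl⟩
  rw [hset, Set.ncard_preimage_of_injective_subset_range Fin.val_injective, Set.ncard_coe_finset,
    hunion, card_image_of_injective _ (slot_injective R), card_product, card_univ,
    Fintype.card_fin]
  intro x hx
  obtain ⟨p, -, hxp⟩ := mem_biUnion.mp hx
  exact ⟨⟨x, (mem_range.mp (blockSupport_subset_range p hxp)).trans_le ht⟩, rfl⟩

end BlockCode

lemma sixteen_div_twentyfive_mul_le {m n s t D : ℝ} (hm : 1 ≤ m) (hn : 100 * m ≤ n)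
    (hD0 : 0 ≤ D) (hs : 5 * m * s ≤ 6 * n + 5 * m) (ht : t ≤ 100 * m * (n + 1))
    (hD : (100 * m * n) ^ 2 ≤ D * (100 * m * (n + 100 * m * s))) :
    16 / 25 * t ≤ D * 99 := by
  have hmn : 0 < m * n := by nlinarith
  have hden : 100 * m * (n + 100 * m * s) ≤ 12200 * (m * n) := by nlinarith
  have hD' : 100 * (m * n) ≤ 122 * D := by nlinarith
  nlinarith

lemma exists_spread_family (m : ℕ) (hm : 2 ≤ m) (t : ℕ) (ht : 10000 * m ^ 2 ≤ t) :
    ∃ F : Finset (Fin t → Bool), Real.exp (t / (20000 * m ^ 2)) ≤ #F ∧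
      (∀ a ∈ F, ∀ p q : Fin t, p < q → a p = true → a q = true → m ≤ q.val - p.val) ∧
      ∀ S ⊆ F, #S = 100 * m → 16 / 25 * (t : ℝ) ≤ {i : Fin t | ∃ a ∈ S, a i = true}.ncard := by
  set n := t / (100 * m)
  set s := 6 * n / (5 * m) + 1
  have hn : 100 * m ≤ n := (Nat.le_div_iff_mul_le (by positivity)).mpr (by nlinarith)
  have htn : 100 * m * n ≤ t := Nat.mul_div_le t (100 * m)
  have htn' : t < 100 * m * (n + 1) := Nat.lt_mul_div_succ t (by positivity)
  have hs : 6 * n ≤ 5 * m * s := (Nat.lt_mul_div_succ (6 * n) (by positivity)).le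
  have hs' : 5 * m * s ≤ 6 * n + 5 * m := by
    have := Nat.mul_div_le (6 * n) (5 * m)
    simp only [s, mul_add, mul_one]
    omega
  have hsn : s ≤ n := by
    have : 6 * n / (5 * m) ≤ 6 * n / 10 := Nat.div_le_div_left (by omega) (by omega)
    omega
  obtain ⟨C, hC, hcard⟩ := exists_code_exp_le_card (by omega) hsn hs
  have hinj := blockString_injective (R := 100) (t := t) (by norm_num) htn
  refine ⟨C.image (blockString 100 t), ?_, ?_, ?_⟩
  · rw [card_image_of_injective _ hinj]
    refine le_trans (Real.exp_le_exp.mpr ?_) hcard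
    have hm' : (0 : ℝ) < m := by positivity
    have ht' : (t : ℝ) ≤ 200 * m * n := by
      have : (t : ℝ) < 100 * m * (n + 1) := by exact_mod_cast htn'
      have : (1 : ℝ) ≤ n := by exact_mod_cast (show 1 ≤ n by nlinarith)
      nlinarith
    rw [div_le_div_iff₀ (by positivity) (by positivity)]
    nlinarith
  · rintro a ha i j hij hi hj
    obtain ⟨p, -, rfl⟩ := mem_image.mp ha
    simp only [blockString, decide_eq_true_eq] at hi hj
    have := add_le_of_mem_blockSupport hi hj hij
    omega
  · intro S hS hk
    obtain ⟨T, hTC, rfl⟩ := Finset.subset_image_iff.mp hS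
    have hT : #T = 100 * m := by rwa [card_image_of_injective _ hinj] at hk
    have hCS := sq_card_mul_le_card_biUnion_graph_mul (hC.mono hTC)
    rw [hT, Fintype.card_fin] at hCS
    rw [ncard_blockString_or htn]
    push_cast
    apply sixteen_div_twentyfive_mul_le (m := m) (n := n) (s := s)
    · exact_mod_cast (show 1 ≤ m by omega)
    · exact_mod_cast hn
    · positivity
    · exact_mod_cast hs'
    · exact_mod_cast htn'.le
    · exact_mod_cast hCS

lemma one_sub_one_div_exp_one_lt : 1 - 1 / Real.exp 1 < 16 / 25 := by
  have : 9 / 25 < 1 / Real.exp 1 := by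
    rw [lt_div_iff₀ (Real.exp_pos 1)]
    linarith [Real.exp_one_lt_d9]
  linarith

theorem stmt15_general (l : ℕ) (hl : 1 ≤ l) (α : ℝ)
    (hα2 : α < 1 - 1 / Real.exp 1) :
    ∃ k : ℕ, 2 ≤ k ∧ ∃ c : ℝ, 1 < c ∧ ∃ t₀ : ℕ, ∀ t : ℕ, t₀ ≤ t →
      ∃ F : Finset (Fin t → Bool),
        c ^ t ≤ (F.card : ℝ) ∧
        (∀ a ∈ F, ∀ p q : Fin t, p < q → a p = true → a q = true →
          l + 1 ≤ q.val - p.val) ∧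
        (∀ S : Finset (Fin t → Bool), S ⊆ F → S.card = k →
          α * (t : ℝ) ≤ ({i : Fin t | ∃ a ∈ S, a i = true}.ncard : ℝ)) := by
  have hα : α ≤ 16 / 25 := (hα2.trans one_sub_one_div_exp_one_lt).le
  refine ⟨100 * (l + 1), by omega, Real.exp (1 / (20000 * ((l + 1 : ℕ) : ℝ) ^ 2)),
    Real.one_lt_exp_iff.mpr (by positivity), 10000 * (l + 1) ^ 2, fun t ht => ?_⟩
  obtain ⟨F, hcard, hgap, hcover⟩ := exists_spread_family (l + 1) (by omega) t ht
  refine ⟨F, ?_, hgap, fun S hS hk => ?_⟩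
  · rwa [← Real.exp_nat_mul, mul_one_div]
  · exact (mul_le_mul_of_nonneg_right hα t.cast_nonneg).trans (hcover S hS hk)

/-- For every integer `l ≥ 1` and every real `α` with
`1/2 < α < 1 − 1/e`, there exist an integer `k ≥ 2`, a real `c > 1`, and an integer `t₀`
such that for every `t ≥ t₀` there is a family `F ⊆ {0,1}^t` with:
(i) `|F| ≥ c^t`;
(ii) every `a ∈ F` has at least `l` zeros between any two of its ones (i.e. positions
`p < q` with `a_p = a_q = 1` satisfy `q − p ≥ l + 1`);
(iii) for every `k`-element subset `S ⊆ F`, the coordinatewise OR of the members of `S`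
has at least `α·t` coordinates equal to `1`. -/
theorem stmt15 (l : ℕ) (hl : 1 ≤ l) (α : ℝ)
    (hα1 : 1 / 2 < α) (hα2 : α < 1 - 1 / Real.exp 1) :
    ∃ k : ℕ, 2 ≤ k ∧ ∃ c : ℝ, 1 < c ∧ ∃ t₀ : ℕ, ∀ t : ℕ, t₀ ≤ t →
      ∃ F : Finset (Fin t → Bool),
        c ^ t ≤ (F.card : ℝ) ∧
        (∀ a ∈ F, ∀ p q : Fin t, p < q → a p = true → a q = true →
          l + 1 ≤ q.val - p.val) ∧
        (∀ S : Finset (Fin t → Bool), S ⊆ F → S.card = k →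
          α * (t : ℝ) ≤ ({i : Fin t | ∃ a ∈ S, a i = true}.ncard : ℝ)) :=
  stmt15_general l hl α hα2
end
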